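/- arXiv:1301.5022 — 3 statements merged into one kernel-verified Lean document; each statement's English description precedes it below -/
import Mathlib

section
/- If P is the Dirac probability at x₀ and Bel is compatible with P, then the pignistic probability P_Bel attains its maximum at x₀: P_Bel(x₀) ≥ P_Bel(x) for all x ∈ X. -/
/-!
Compatibility with the Dirac measure at `x₀` forces `Bel(X \ {x₀}) = 0`, so every focal set
contains `x₀`. Each focal set containing `x` then also contains `x₀` and contributes the same
nonnegative amount `m B / |B|` to `P_Bel(x₀)`.
-/

open Finset

lemma eq_zero_of_sum_powerset_nonpos {α : Type*} {m : Finset α → ℝ} (hmnn : ∀ A, 0 ≤ m A)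
    {A B : Finset α} (hA : ∑ C ∈ A.powerset, m C ≤ 0) (hBA : B ⊆ A) : m B = 0 :=
  (sum_eq_zero_iff_of_nonneg fun C _ => hmnn C).1 (hA.antisymm (sum_nonneg fun C _ => hmnn C))
    B (mem_powerset.2 hBA)

section

variable {α : Type*} [Fintype α] [DecidableEq α]

noncomputable def pignistic (m : Finset α → ℝ) (x : α) : ℝ :=
  ∑ B ∈ (univ : Finset α).powerset.filter (fun B => x ∈ B), m B / B.card

lemma pignistic_le_of_mass_eq_zero {m : Finset α → ℝ} {x₀ : α} (hmnn : ∀ A, 0 ≤ m A)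
    (hfocal : ∀ B, x₀ ∉ B → m B = 0) (x : α) : pignistic m x ≤ pignistic m x₀ :=
  calc pignistic m x
      = ∑ B ∈ (univ.powerset.filter (fun B => x ∈ B)).filter (fun B => x₀ ∈ B),
          m B / B.card := by
        refine (sum_filter_of_ne fun B _ hB => ?_).symm
        by_contra hx₀
        exact hB (by rw [hfocal B hx₀, zero_div])
    _ ≤ pignistic m x₀ := by
        refine sum_le_sum_of_subset_of_nonneg (fun B hB => ?_)
          fun B _ _ => div_nonneg (hmnn B) B.card.cast_nonneg
        simp only [mem_filter] at hB ⊢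
        exact ⟨hB.1.1, hB.2⟩

end

theorem stmt10_general {α : Type*} [Fintype α] [DecidableEq α]
    (m : Finset α → ℝ) (x₀ : α)
    (hmnn : ∀ A, 0 ≤ m A)
    (hcompat : ∀ A : Finset α,
      (∑ B ∈ A.powerset, m B) ≤ if x₀ ∈ A then (1 : ℝ) else 0) :
    ∀ x : α,
      (∑ B ∈ (Finset.univ : Finset α).powerset.filter (fun B => x ∈ B),
        m B / B.card)
      ≤ ∑ B ∈ (Finset.univ : Finset α).powerset.filter (fun B => x₀ ∈ B),
          m B / B.card := by
  have hbel : ∑ B ∈ (univ.erase x₀).powerset, m B ≤ 0 := by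
    simpa using hcompat (univ.erase x₀)
  exact pignistic_le_of_mass_eq_zero hmnn fun B hB =>
    eq_zero_of_sum_powerset_nonpos hmnn hbel (subset_erase.2 ⟨subset_univ B, hB⟩)

/-- If `P` is the Dirac probability at `x₀` and `Bel` is compatible with `P`,
then the pignistic probability attains its maximum at `x₀`. -/
theorem stmt10 {α : Type*} [Fintype α] [DecidableEq α]
    (m : Finset α → ℝ) (x₀ : α)
    (hm0 : m ∅ = 0) (hmnn : ∀ A, 0 ≤ m A)
    (hmsum : ∑ A ∈ (Finset.univ : Finset α).powerset, m A = 1)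
    (hcompat : ∀ A : Finset α,
      (∑ B ∈ A.powerset, m B) ≤ if x₀ ∈ A then (1 : ℝ) else 0) :
    ∀ x : α,
      (∑ B ∈ (Finset.univ : Finset α).powerset.filter (fun B => x ∈ B),
        m B / B.card)
      ≤ ∑ B ∈ (Finset.univ : Finset α).powerset.filter (fun B => x₀ ∈ B),
          m B / B.card :=
  stmt10_general m x₀ hmnn hcompat
end

section
/- With the assignment m({x₀, x}) = 1/k for each x ∈ A (|A| = k ≥ 2, x₀ ∉ A) and m(C)=0 otherwise, the pignistic probability satisfies P_Bel(x) = 1/(2k) for x ∈ A, P_Bel(x₀) = 1/2, and P_Bel(x) = 0 otherwise; in particular the unique maximizer of P_Bel is x₀, which lies outside A. -/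
open Finset

/-!
Every focal set is a pair `{x₀, y}` with `y ∈ A`, of mass `1/k` shared equally between its two
points. Hence `P_Bel x` is `1/(2k)` times the number of pairs containing `x`: all `k` of them
for `x = x₀`, exactly one for `x ∈ A`, none otherwise.
-/

section Pignistic

variable {α : Type*} [Fintype α] [DecidableEq α]

lemma pignistic_eq_sum_of_support (m : Finset α → ℝ) (F : Finset (Finset α))
    (hm : ∀ C ∉ F, m C = 0) (x : α) :
    pignistic m x = ∑ B ∈ F.filter (fun B => x ∈ B), m B / B.card := by
  refine (sum_subset (fun B hB => ?_) fun B hBx hBF => ?_).symm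
  · simp only [mem_filter, mem_powerset, subset_univ, true_and] at hB ⊢
    exact hB.2
  · rw [hm B fun hB => hBF (mem_filter.2 ⟨hB, (mem_filter.1 hBx).2⟩), zero_div]

lemma pignistic_of_pair_masses (m : Finset α → ℝ) (A : Finset α) {x₀ : α} (hx₀ : x₀ ∉ A)
    (hm1 : ∀ y ∈ A, m {x₀, y} = 1 / (A.card : ℝ))
    (hm0 : ∀ C : Finset α, (∀ y ∈ A, C ≠ {x₀, y}) → m C = 0) (x : α) :
    pignistic m x = (A.filter (fun y => x = x₀ ∨ x = y)).card / (2 * (A.card : ℝ)) := by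
  have hpair_card : ∀ y ∈ A, (({x₀, y} : Finset α).card : ℝ) = 2 := fun y hy => by
    rw [card_pair (ne_of_mem_of_not_mem hy hx₀).symm]; norm_num
  have hpair_inj : Set.InjOn (fun y => ({x₀, y} : Finset α)) A := fun y hy z hz hyz => by
    have : y ∈ ({x₀, z} : Finset α) := (show ({x₀, y} : Finset α) = {x₀, z} from hyz) ▸ by simp
    simpa [ne_of_mem_of_not_mem hy hx₀] using this
  rw [pignistic_eq_sum_of_support m (A.image fun y => {x₀, y})
      (fun C hC => hm0 C fun y hy hCy => hC (mem_image.2 ⟨y, hy, hCy.symm⟩)),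
    filter_image, sum_image (hpair_inj.mono (filter_subset _ _)), card_eq_sum_ones, Nat.cast_sum,
    sum_div]
  refine sum_congr (by simp only [mem_insert, mem_singleton]) fun y hy => ?_
  rw [hm1 y (filter_subset _ _ hy), hpair_card y (filter_subset _ _ hy)]
  push_cast
  ring

end Pignistic

theorem stmt12_general {α : Type*} [Fintype α] [DecidableEq α]
    (m : Finset α → ℝ) (A : Finset α) (x₀ : α)
    (hA : 2 ≤ A.card) (hx₀ : x₀ ∉ A)
    (hm1 : ∀ x ∈ A, m {x₀, x} = 1 / (A.card : ℝ))
    (hm0 : ∀ C : Finset α, (∀ x ∈ A, C ≠ {x₀, x}) → m C = 0)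
    (PBel : α → ℝ)
    (hPBel : ∀ x : α, PBel x =
      ∑ B ∈ (Finset.univ : Finset α).powerset.filter (fun B => x ∈ B),
        m B / B.card) :
    (∀ x ∈ A, PBel x = 1 / (2 * (A.card : ℝ))) ∧
    PBel x₀ = 1 / 2 ∧
    (∀ x : α, x ∉ A → x ≠ x₀ → PBel x = 0) ∧
    (∀ x : α, x ≠ x₀ → PBel x < PBel x₀) := by
  have hPBel' (x : α) :
      PBel x = (A.filter (fun y => x = x₀ ∨ x = y)).card / (2 * (A.card : ℝ)) :=
    (hPBel x).trans (pignistic_of_pair_masses m A hx₀ hm1 hm0 x)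
  have hk : (0 : ℝ) < A.card := by exact_mod_cast (by omega : 0 < A.card)
  have hA_pt : ∀ x ∈ A, PBel x = 1 / (2 * (A.card : ℝ)) := fun x hx => by
    rw [hPBel', filter_or, filter_false_of_mem fun y _ => ne_of_mem_of_not_mem hx hx₀,
      empty_union, filter_eq A x, if_pos hx, card_singleton, Nat.cast_one]
  have hx₀_pt : PBel x₀ = 1 / 2 := by
    rw [hPBel', filter_true_of_mem fun y _ => Or.inl rfl]
    field_simp
  have hout : ∀ x : α, x ∉ A → x ≠ x₀ → PBel x = 0 := fun x hxA hxx₀ => by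
    rw [hPBel', filter_false_of_mem fun y hy h => h.elim hxx₀ fun hxy => hxA (hxy ▸ hy)]
    simp
  refine ⟨hA_pt, hx₀_pt, hout, fun x hxx₀ => ?_⟩
  have hk2 : (2 : ℝ) ≤ A.card := by exact_mod_cast hA
  by_cases hxA : x ∈ A
  · rw [hA_pt x hxA, hx₀_pt]
    gcongr
    linarith
  · rw [hout x hxA hxx₀, hx₀_pt]
    norm_num

/-- With `m {x₀, x} = 1/k` for `x ∈ A` (`|A| = k ≥ 2`, `x₀ ∉ A`) and `m = 0`
elsewhere, the pignistic probability equals `1/(2k)` on `A`, `1/2` at `x₀`,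
and `0` elsewhere; in particular `x₀` is its unique maximizer. -/
theorem stmt12 {α : Type*} [Fintype α] [DecidableEq α]
    (m : Finset α → ℝ) (A : Finset α) (x₀ : α)
    (hX : 3 ≤ Fintype.card α) (hA : 2 ≤ A.card) (hx₀ : x₀ ∉ A)
    (hm1 : ∀ x ∈ A, m {x₀, x} = 1 / (A.card : ℝ))
    (hm0 : ∀ C : Finset α, (∀ x ∈ A, C ≠ {x₀, x}) → m C = 0)
    (PBel : α → ℝ)
    (hPBel : ∀ x : α, PBel x =
      ∑ B ∈ (Finset.univ : Finset α).powerset.filter (fun B => x ∈ B),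
        m B / B.card) :
    (∀ x ∈ A, PBel x = 1 / (2 * (A.card : ℝ))) ∧
    PBel x₀ = 1 / 2 ∧
    (∀ x : α, x ∉ A → x ≠ x₀ → PBel x = 0) ∧
    (∀ x : α, x ≠ x₀ → PBel x < PBel x₀) :=
  stmt12_general m A x₀ hA hx₀ hm1 hm0 PBel hPBel
end

section
/- If Bel₁ and Bel₂ are belief functions compatible with a probability P (Belᵢ ≤ P pointwise) and 𝕔 is any acceptable combination returning a belief function Bel with Bel ≤ P and N(Bel) ≤ min(N(Bel₁), N(Bel₂)), then the iterated combination of r belief functions Bel_{it_1},…,Bel_{it_r} all compatible with P yields at each stage a belief function Bel_r compatible with P with N(Bel_r) monotonically non-increasing in r; moreover, if at some stage r₀ the result Bel_{r₀} has N(Bel_{r₀}) = 0, then Bel_{r₀} is a probability distribution. -/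
open Finset

lemma iterate_combine_induction {β : Type*} (p : β → Prop) (C : β → β → β)
    (hC : ∀ x y, p x → p y → p (C x y)) (ms : ℕ → β) (hms : ∀ r, p (ms r))
    (b : ℕ → β) (hb0 : b 0 = ms 0) (hbS : ∀ r, b (r + 1) = C (b r) (ms (r + 1))) :
    ∀ r, p (b r)
  | 0 => hb0 ▸ hms 0
  | r + 1 => hbS r ▸ hC _ _ (iterate_combine_induction p C hC ms hms b hb0 hbS r) (hms (r + 1))

lemma mul_log_card_nonneg {α : Type*} {m : Finset α → ℝ} (hm : ∀ A, 0 ≤ m A) (A : Finset α) :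
    0 ≤ m A * Real.log A.card :=
  mul_nonneg (hm A) (Real.log_natCast_nonneg _)

lemma eq_zero_of_sum_mul_log_card_eq_zero {α : Type*} [Fintype α] {m : Finset α → ℝ}
    (hm : ∀ A, 0 ≤ m A)
    (hN : ∑ A ∈ (univ : Finset α).powerset, m A * Real.log A.card = 0)
    {A : Finset α} (hA : 2 ≤ A.card) : m A = 0 := by
  have hterm : m A * Real.log A.card = 0 :=
    (sum_eq_zero_iff_of_nonneg fun B _ => mul_log_card_nonneg hm B).1 hN A
      (mem_powerset.2 (subset_univ A))
  have hlog : Real.log A.card ≠ 0 :=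
    (Real.log_pos (by exact_mod_cast hA)).ne'
  exact (mul_eq_zero.1 hterm).resolve_right hlog

theorem stmt19_general {α : Type*} [Fintype α]
    -- `isBPA m` and compatibility of the associated belief function with `P`
    (isBPA : (Finset α → ℝ) → Prop)
    (hisBPA : ∀ m : Finset α → ℝ, isBPA m ↔
      (m ∅ = 0 ∧ (∀ A, 0 ≤ m A) ∧
        ∑ A ∈ (Finset.univ : Finset α).powerset, m A = 1))
    (compat : (Finset α → ℝ) → Prop)
    -- the nonspecificity measure
    (N : (Finset α → ℝ) → ℝ)
    (hN : ∀ m : Finset α → ℝ,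
      N m = ∑ A ∈ (Finset.univ : Finset α).powerset, m A * Real.log A.card)
    -- an acceptable combination function
    (C : (Finset α → ℝ) → (Finset α → ℝ) → (Finset α → ℝ))
    (hC : ∀ m₁ m₂ : Finset α → ℝ,
      isBPA m₁ → compat m₁ → isBPA m₂ → compat m₂ →
        isBPA (C m₁ m₂) ∧ compat (C m₁ m₂) ∧
        N (C m₁ m₂) ≤ min (N m₁) (N m₂))
    -- a sequence of items of additional information, each a compatible bpa
    (ms : ℕ → (Finset α → ℝ))
    (hms : ∀ r : ℕ, isBPA (ms r) ∧ compat (ms r))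
    -- the iterated combination
    (b : ℕ → (Finset α → ℝ))
    (hb0 : b 0 = ms 0)
    (hbS : ∀ r : ℕ, b (r + 1) = C (b r) (ms (r + 1))) :
    (∀ r : ℕ, isBPA (b r) ∧ compat (b r)) ∧
    (∀ r : ℕ, N (b (r + 1)) ≤ N (b r)) ∧
    (∀ r₀ : ℕ, N (b r₀) = 0 →
      ∀ A : Finset α, 2 ≤ A.card → b r₀ A = 0) := by
  have hall : ∀ r, isBPA (b r) ∧ compat (b r) :=
    iterate_combine_induction (fun m => isBPA m ∧ compat m) C
      (fun x y hx hy => (hC x y hx.1 hx.2 hy.1 hy.2).imp_right And.left) ms hms b hb0 hbS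
  refine ⟨hall, fun r => ?_, fun r₀ hzero A hA => ?_⟩
  · rw [hbS r]
    exact ((hC _ _ (hall r).1 (hall r).2 (hms (r + 1)).1 (hms (r + 1)).2).2.2).trans
      (min_le_left _ _)
  · exact eq_zero_of_sum_mul_log_card_eq_zero ((hisBPA _).1 (hall r₀).1).2.1
      ((hN _).symm.trans hzero) hA

/-- Iterated acceptable combination of belief functions compatible with a true
probability `P` stays compatible with `P`, has non-increasing nonspecificity,
and if the nonspecificity vanishes at some stage the result is a probability
distribution (mass concentrated on singletons). -/
theorem stmt19 {α : Type*} [Fintype α] [DecidableEq α]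
    (P : Finset α → ℝ)
    (hP0 : P ∅ = 0) (hP1 : P Finset.univ = 1) (hPnn : ∀ A, 0 ≤ P A)
    (hPadd : ∀ A B : Finset α, Disjoint A B → P (A ∪ B) = P A + P B)
    -- `isBPA m` and compatibility of the associated belief function with `P`
    (isBPA : (Finset α → ℝ) → Prop)
    (hisBPA : ∀ m : Finset α → ℝ, isBPA m ↔
      (m ∅ = 0 ∧ (∀ A, 0 ≤ m A) ∧
        ∑ A ∈ (Finset.univ : Finset α).powerset, m A = 1))
    (compat : (Finset α → ℝ) → Prop)
    (hcompat : ∀ m : Finset α → ℝ, compat m ↔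
      ∀ A : Finset α, (∑ B ∈ A.powerset, m B) ≤ P A)
    -- the nonspecificity measure
    (N : (Finset α → ℝ) → ℝ)
    (hN : ∀ m : Finset α → ℝ,
      N m = ∑ A ∈ (Finset.univ : Finset α).powerset, m A * Real.log A.card)
    -- an acceptable combination function
    (C : (Finset α → ℝ) → (Finset α → ℝ) → (Finset α → ℝ))
    (hC : ∀ m₁ m₂ : Finset α → ℝ,
      isBPA m₁ → compat m₁ → isBPA m₂ → compat m₂ →
        isBPA (C m₁ m₂) ∧ compat (C m₁ m₂) ∧
        N (C m₁ m₂) ≤ min (N m₁) (N m₂))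
    -- a sequence of items of additional information, each a compatible bpa
    (ms : ℕ → (Finset α → ℝ))
    (hms : ∀ r : ℕ, isBPA (ms r) ∧ compat (ms r))
    -- the iterated combination
    (b : ℕ → (Finset α → ℝ))
    (hb0 : b 0 = ms 0)
    (hbS : ∀ r : ℕ, b (r + 1) = C (b r) (ms (r + 1))) :
    (∀ r : ℕ, isBPA (b r) ∧ compat (b r)) ∧
    (∀ r : ℕ, N (b (r + 1)) ≤ N (b r)) ∧
    (∀ r₀ : ℕ, N (b r₀) = 0 →
      ∀ A : Finset α, 2 ≤ A.card → b r₀ A = 0) :=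
  stmt19_general isBPA hisBPA compat N hN C hC ms hms b hb0 hbS
end
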